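/- Let C be a chain complex as in the context and let h ∈ H^i(C) be a torsion cohomology class. Then h ≠ 0 if and only if there exist an integer n ≥ 2, a chain c ∈ C_i, and a cocycle φ ∈ C^i representing h such that ∂c ∈ n·C_{i−1} and φ(c) is not divisible by n. -/

import Mathlib

/-!
If `k • [φ] = 0` then `k • φ = ψ ∘ ∂`, so `φ` kills the cycles and factors through
`∂ : C_i → B`, `B ⊆ C_{i-1}` the boundaries. The class vanishes iff this functional on `B`
extends to `C_{i-1}`. Putting `B ⊆ C_{i-1}` in Smith normal form shows it extends iff it is
divisible by `n` on `B ∩ n • C_{i-1}` for every `n`, and a failure of this for some `n ≥ 2` is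
precisely a certificate `(n, c, φ)`; the cases `n = 0, ±1` are automatic.
-/

/-- A chain complex of abelian groups in nonnegative degrees such that each chain group
is a free ℤ-module on a finite basis: the degree-`i` chain group is `ι i → ℤ`, the free
ℤ-module on the finite type `ι i`. -/
structure FreeChainComplex where
  ι : ℕ → Type
  fin : ∀ i, Fintype (ι i)
  bd : ∀ i, ((ι (i + 1) → ℤ) →+ (ι i → ℤ))
  bd_bd : ∀ i (x : ι (i + 2) → ℤ), bd i (bd (i + 1) x) = 0

namespace FreeChainComplex

variable (X : FreeChainComplex)

/-- degree-`i` chains -/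
abbrev Chain (i : ℕ) := X.ι i → ℤ

/-- degree-`i` integral cochains: `C^i = Hom(C_i, ℤ)` -/
abbrev Cochain (i : ℕ) := (X.ι i → ℤ) →+ ℤ

/-- the boundary map out of degree `i` (the zero map in degree `0`,
since the complex lives in nonnegative degrees). -/
def bdFrom : ∀ i : ℕ, ((X.ι i → ℤ) →+ (X.ι (i - 1) → ℤ))
  | 0 => 0
  | (j + 1) => X.bd j

/-- the coboundary `δφ = φ ∘ ∂` -/
def cb (i : ℕ) : X.Cochain i →+ X.Cochain (i + 1) where
  toFun φ := φ.comp (X.bd i)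
  map_zero' := by ext x; simp
  map_add' _ _ := by ext x; simp

/-- degree-`i` cocycles -/
def cocycles (i : ℕ) : AddSubgroup (X.Cochain i) := (X.cb i).ker

/-- degree-`i` coboundaries (there are none in degree 0) -/
def cobds : ∀ i : ℕ, AddSubgroup (X.Cochain i)
  | 0 => ⊥
  | (j + 1) => (X.cb j).range

/-- the `i`-th integral cohomology of the cochain complex `Hom(C, ℤ)` -/
abbrev H (i : ℕ) := X.cocycles i ⧸ (X.cobds i).addSubgroupOf (X.cocycles i)

/-- the cohomology class of a cocycle -/
def cls (i : ℕ) (φ : X.Cochain i) (h : φ ∈ X.cocycles i) : X.H i :=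
  QuotientAddGroup.mk ⟨φ, h⟩

end FreeChainComplex

namespace LinearMap

variable {R M N : Type*} [CommRing R] [IsDomain R] [IsPrincipalIdealRing R]
  [AddCommGroup M] [Module R M] [AddCommGroup N] [Module R N] [Module.Free R N] [Module.Finite R N]

/-- Smith normal form gives a basis `a j • e j` of `W` with `e` part of a basis of `N`;
the hypothesis lets `g (e j) := f (a j • e j) / a j`. -/
theorem exists_comp_subtype_eq_of_dvd (W : Submodule R N) (f : W →ₗ[R] R)
    (hdvd : ∀ (n : R) (w : W) (b : N), (w : N) = n • b → n ∣ f w) :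
    ∃ g : N →ₗ[R] R, g ∘ₗ W.subtype = f := by
  obtain ⟨_, bN, bW, e, a, ha⟩ := W.smithNormalForm (Module.Free.chooseBasis R N)
  choose q hq using fun j => hdvd (a j) (bW j) _ (ha j)
  refine ⟨bN.constr R (Function.extend e q 0), bW.ext fun j => ?_⟩
  simp [ha j, e.injective.extend_apply, hq j]

theorem exists_comp_eq_iff_dvd (D : M →ₗ[R] N) (φ : M →ₗ[R] R) :
    (∃ g : N →ₗ[R] R, g ∘ₗ D = φ) ↔ ∀ (n : R) (c : M) (b : N), D c = n • b → n ∣ φ c := by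
  constructor
  · rintro ⟨g, rfl⟩ n c b hc
    exact ⟨g b, by simp [hc]⟩
  · intro hdvd
    have hker : ker D ≤ ker φ := fun c hc => by
      simpa using hdvd 0 c 0 (by simpa using hc)
    set f := (ker D).liftQ φ hker ∘ₗ (D.quotKerEquivRange.symm : range D →ₗ[R] _)
    have hf : ∀ c, f ⟨D c, mem_range_self D c⟩ = φ c := fun c => by
      simp [f, quotKerEquivRange_symm_apply_image]
    obtain ⟨g, hg⟩ := exists_comp_subtype_eq_of_dvd (range D) f fun n ⟨_, c, rfl⟩ b hc => by
      simpa [hf] using hdvd n c b hc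
    exact ⟨g, LinearMap.ext fun c => by simpa [hf] using congr($hg ⟨D c, mem_range_self D c⟩)⟩

end LinearMap

theorem AddMonoidHom.int_dvd_of_forall_two_le {M N : Type*} [AddCommGroup M] [AddCommGroup N]
    (D : M →+ N) (φ : M →+ ℤ) (hker : ∀ c, D c = 0 → φ c = 0)
    (hdvd : ∀ n : ℕ, 2 ≤ n → ∀ c b, D c = (n : ℤ) • b → (n : ℤ) ∣ φ c)
    (n : ℤ) (c : M) (b : N) (hc : D c = n • b) : n ∣ φ c := by
  rw [← Int.natAbs_dvd]
  have hc' : D c = (n.natAbs : ℤ) • (n.sign • b) := by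
    rw [smul_smul, mul_comm, Int.sign_mul_natAbs, hc]
  rcases Nat.lt_or_ge n.natAbs 2 with hlt | hge
  · interval_cases h : n.natAbs
    · simp [hker c (by simpa using hc')]
    · exact one_dvd _
  · exact hdvd _ hge c _ hc'

namespace FreeChainComplex

variable (X : FreeChainComplex) {i : ℕ}

theorem exists_cls_eq (h : X.H i) : ∃ φ hφ, X.cls i φ hφ = h := by
  obtain ⟨⟨φ, hφ⟩, rfl⟩ := QuotientAddGroup.mk_surjective h
  exact ⟨φ, hφ, rfl⟩

theorem nsmul_cls (k : ℕ) {φ : X.Cochain i} (hφ : φ ∈ X.cocycles i) :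
    k • X.cls i φ hφ = X.cls i (k • φ) (nsmul_mem hφ k) :=
  (map_nsmul (QuotientAddGroup.mk' _) _ _).symm

theorem cls_eq_zero_iff {φ : X.Cochain i} (hφ : φ ∈ X.cocycles i) :
    X.cls i φ hφ = 0 ↔ φ ∈ X.cobds i :=
  (QuotientAddGroup.eq_zero_iff _).trans AddSubgroup.mem_addSubgroupOf

theorem mem_cobds_iff (φ : X.Cochain i) :
    φ ∈ X.cobds i ↔ ∃ ψ : X.Cochain (i - 1), ψ.comp (X.bdFrom i) = φ := by
  cases i with
  | zero => simp [cobds, bdFrom, eq_comm]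
  | succ j => rfl

theorem mem_cobds_iff_dvd (φ : X.Cochain i) :
    φ ∈ X.cobds i ↔ ∀ (n : ℤ) c b, X.bdFrom i c = n • b → n ∣ φ c := by
  have := X.fin (i - 1)
  refine (X.mem_cobds_iff φ).trans (Iff.trans ?_
    (LinearMap.exists_comp_eq_iff_dvd (X.bdFrom i).toIntLinearMap φ.toIntLinearMap))
  constructor
  · rintro ⟨ψ, rfl⟩
    exact ⟨ψ.toIntLinearMap, rfl⟩
  · rintro ⟨g, hg⟩
    exact ⟨g.toAddMonoidHom, AddMonoidHom.ext fun c => congr($hg c)⟩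

theorem apply_eq_zero_of_nsmul_cls_eq_zero {k : ℕ} (hk : 1 ≤ k) {φ : X.Cochain i}
    (hφ : φ ∈ X.cocycles i) (hkφ : k • X.cls i φ hφ = 0) (c : X.Chain i)
    (hc : X.bdFrom i c = 0) : φ c = 0 := by
  rw [nsmul_cls, cls_eq_zero_iff, mem_cobds_iff_dvd] at hkφ
  simpa [show k ≠ 0 by omega] using hkφ 0 c 0 (by simpa using hc)

end FreeChainComplex

theorem certificate_for_nontrivial_torsion_class
    (X : FreeChainComplex) (i : ℕ) (h : X.H i)
    (htor : ∃ k : ℕ, 1 ≤ k ∧ k • h = 0) :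
    h ≠ 0 ↔
      ∃ n : ℕ, 2 ≤ n ∧
        ∃ (c : X.Chain i) (φ : X.Cochain i) (hφ : φ ∈ X.cocycles i),
          X.cls i φ hφ = h ∧
          (∃ c' : X.Chain (i - 1), X.bdFrom i c = (n : ℤ) • c') ∧
          ¬ ((n : ℤ) ∣ φ c) := by
  obtain ⟨k, hk, hkh⟩ := htor
  obtain ⟨φ, hφ, rfl⟩ := X.exists_cls_eq h
  constructor
  · intro hne
    by_contra! hcert
    refine hne ((X.cls_eq_zero_iff hφ).2 ((X.mem_cobds_iff_dvd φ).2 ?_))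
    exact (X.bdFrom i).int_dvd_of_forall_two_le φ
      (X.apply_eq_zero_of_nsmul_cls_eq_zero hk hφ hkh)
      fun n hn c b hc => hcert n hn c φ hφ rfl ⟨b, hc⟩
  · rintro ⟨n, -, c, ψ, hψ, hcls, ⟨b, hb⟩, hndvd⟩ h0
    exact hndvd ((X.mem_cobds_iff_dvd ψ).1 ((X.cls_eq_zero_iff hψ).1 (hcls.trans h0)) n c b hb)
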